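/- Let n ≥ 1, let ρ be an n×n positive definite Hermitian complex matrix with Tr ρ = 1, and let B be an n×n Hermitian complex matrix. Then exp(Tr(ρB)) ≤ Tr(exp(log ρ + B)) ≤ exp(‖B‖), where log ρ is the matrix logarithm defined by functional calculus on positive definite Hermitian matrices and ‖B‖ is the operator norm of B. -/

import Mathlib

/-!
Diagonalise `ρ = ∑ p_j u_j u_jᴴ` and `H = log ρ + B = ∑ μ_i v_i v_iᴴ`. The overlaps
`c_ij = |⟪v_i, u_j⟫|²` form a doubly stochastic matrix, and in the eigenbasis of `H` one reads off
`Tr(ρB) = ∑ q_i μ_i - ∑ p_j log p_j` with `q = c p`, `Tr exp H = ∑ exp μ_i` and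
`μ_i = ∑_j c_ij log p_j + ⟪v_i, B v_i⟫`.

Lower bound: a doubly stochastic matrix can only decrease `∑ x log x`, and Gibbs' inequality
`exp (∑ q_i μ_i - ∑ q_i log q_i) ≤ ∑ exp μ_i` is Jensen's inequality for `exp`.
Upper bound: `⟪v_i, B v_i⟫ ≤ ‖B‖`, and Jensen for `exp` gives `exp (∑_j c_ij log p_j) ≤ q_i`,
which sums to `1`.
-/

open scoped ComplexOrder
open Finset Matrix

lemma Real.exp_sum_mul_sub_sum_mul_log_le {ι : Type*} [Fintype ι] {q : ι → ℝ}
    (hq : ∀ i, 0 < q i) (hqsum : ∑ i, q i = 1) (μ : ι → ℝ) :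
    Real.exp (∑ i, q i * μ i - ∑ i, q i * Real.log (q i)) ≤ ∑ i, Real.exp (μ i) := by
  calc Real.exp (∑ i, q i * μ i - ∑ i, q i * Real.log (q i))
      = Real.exp (∑ i, q i • (μ i - Real.log (q i))) := by
        simp only [smul_eq_mul, mul_sub, sum_sub_distrib]
    _ ≤ ∑ i, q i • Real.exp (μ i - Real.log (q i)) :=
        convexOn_exp.map_sum_le (fun i _ => (hq i).le) hqsum fun i _ => Set.mem_univ _
    _ = ∑ i, Real.exp (μ i) := by
        refine sum_congr rfl fun i _ => ?_
        rw [smul_eq_mul, Real.exp_sub, Real.exp_log (hq i), mul_div_cancel₀ _ (hq i).ne']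

section DoublyStochastic

variable {n : Type*} [Fintype n] [DecidableEq n] {C : Matrix n n ℝ} {p : n → ℝ}

lemma mulVec_pos_of_mem_doublyStochastic (hC : C ∈ doublyStochastic ℝ n) (hp : ∀ j, 0 < p j)
    (i : n) : 0 < (C *ᵥ p) i := by
  obtain ⟨j, -, hj⟩ := exists_lt_of_sum_lt <| show ∑ _j : n, (0 : ℝ) < ∑ j, C i j by
    simp [sum_row_of_mem_doublyStochastic hC i]
  exact sum_pos' (fun k _ => mul_nonneg (nonneg_of_mem_doublyStochastic hC) (hp k).le)
    ⟨j, mem_univ j, mul_pos hj (hp j)⟩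

lemma sum_mulVec_mul_log_le (hC : C ∈ doublyStochastic ℝ n) (hp : ∀ j, 0 ≤ p j) :
    ∑ i, (C *ᵥ p) i * Real.log ((C *ᵥ p) i) ≤ ∑ j, p j * Real.log (p j) := by
  calc ∑ i, (C *ᵥ p) i * Real.log ((C *ᵥ p) i)
      ≤ ∑ i, (C *ᵥ fun j => p j * Real.log (p j)) i := by
        refine sum_le_sum fun i _ => ?_
        simpa [mulVec, dotProduct] using Real.convexOn_mul_log.map_sum_le
          (fun j _ => nonneg_of_mem_doublyStochastic hC) (sum_row_of_mem_doublyStochastic hC i)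
          (fun j _ => hp j)
    _ = ∑ j, p j * Real.log (p j) := sum_mulVec_of_mem_doublyStochastic hC

lemma exp_mulVec_log_le (hC : C ∈ doublyStochastic ℝ n) (hp : ∀ j, 0 < p j) (i : n) :
    Real.exp ((C *ᵥ (Real.log ∘ p)) i) ≤ (C *ᵥ p) i := by
  simpa [mulVec, dotProduct, Real.exp_log (hp _)] using convexOn_exp.map_sum_le
    (fun j _ => nonneg_of_mem_doublyStochastic hC) (sum_row_of_mem_doublyStochastic hC i)
    (fun j _ => Set.mem_univ (Real.log (p j)))

lemma exp_sum_mulVec_mul_sub_sum_mul_log_le (hC : C ∈ doublyStochastic ℝ n)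
    (hp : ∀ j, 0 < p j) (hpsum : ∑ j, p j = 1) (μ : n → ℝ) :
    Real.exp (∑ i, (C *ᵥ p) i * μ i - ∑ j, p j * Real.log (p j)) ≤ ∑ i, Real.exp (μ i) := by
  calc Real.exp (∑ i, (C *ᵥ p) i * μ i - ∑ j, p j * Real.log (p j))
      ≤ Real.exp (∑ i, (C *ᵥ p) i * μ i - ∑ i, (C *ᵥ p) i * Real.log ((C *ᵥ p) i)) := by
        gcongr Real.exp (_ - ?_)
        exact sum_mulVec_mul_log_le hC fun j => (hp j).le
    _ ≤ ∑ i, Real.exp (μ i) :=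
        Real.exp_sum_mul_sub_sum_mul_log_le (mulVec_pos_of_mem_doublyStochastic hC hp)
          ((sum_mulVec_of_mem_doublyStochastic hC).trans hpsum) μ

lemma sum_exp_le_exp_of_le_mulVec_log_add (hC : C ∈ doublyStochastic ℝ n)
    (hp : ∀ j, 0 < p j) (hpsum : ∑ j, p j = 1) {μ : n → ℝ} {K : ℝ}
    (hμ : ∀ i, μ i ≤ (C *ᵥ (Real.log ∘ p)) i + K) :
    ∑ i, Real.exp (μ i) ≤ Real.exp K := by
  calc ∑ i, Real.exp (μ i) ≤ ∑ i, (C *ᵥ p) i * Real.exp K := by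
        refine sum_le_sum fun i _ => ?_
        grw [hμ i, Real.exp_add, exp_mulVec_log_le hC hp i]
    _ = Real.exp K := by rw [← sum_mul, sum_mulVec_of_mem_doublyStochastic hC, hpsum, one_mul]

end DoublyStochastic

section RCLike

variable {𝕜 n : Type*} [RCLike 𝕜] [Fintype n] [DecidableEq n]

lemma Matrix.mul_diagonal_mul_star_apply_self (W : Matrix n n 𝕜) (d : n → ℝ) (i : n) :
    (W * diagonal (RCLike.ofReal ∘ d) * star W : Matrix n n 𝕜) i i =
      ((W.map (‖·‖ ^ 2) *ᵥ d) i : 𝕜) := by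
  rw [mul_apply]
  simp only [mul_diagonal, star_apply, mulVec, dotProduct, map_apply, RCLike.ofReal_sum,
    RCLike.ofReal_mul, RCLike.ofReal_pow, Function.comp_apply]
  refine sum_congr rfl fun j _ => ?_
  rw [mul_right_comm, RCLike.star_def, RCLike.mul_conj]

lemma Matrix.map_norm_sq_mem_doublyStochastic {W : Matrix n n 𝕜} (hW : W ∈ unitaryGroup n 𝕜) :
    W.map (‖·‖ ^ 2) ∈ doublyStochastic ℝ n := by
  have hrow (V : Matrix n n 𝕜) (hV : V * star V = 1) (i : n) : ∑ j, ‖V i j‖ ^ 2 = 1 := by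
    have := V.mul_diagonal_mul_star_apply_self (fun _ => 1) i
    simp only [Function.comp_def, map_one, diagonal_one, mul_one, hV, one_apply_eq, mulVec,
      dotProduct, map_apply, map_sum, map_pow] at this
    exact_mod_cast this.symm
  refine mem_doublyStochastic_iff_sum.2 ⟨fun i j => sq_nonneg ‖W i j‖, hrow W ?_, fun j => ?_⟩
  · exact mem_unitaryGroup_iff.1 hW
  · simpa using hrow (star W) (by simpa using mem_unitaryGroup_iff'.1 hW) j

namespace Matrix.IsHermitian

variable {A H : Matrix n n 𝕜}

lemma isHermitian_cfc (hA : A.IsHermitian) (f : ℝ → ℝ) : (hA.cfc f).IsHermitian := by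
  rw [← hA.cfc_eq]
  exact cfc_predicate f A

lemma cfc_mul_cfc (hA : A.IsHermitian) (f g : ℝ → ℝ) :
    hA.cfc f * hA.cfc g = hA.cfc (fun x => f x * g x) := by
  simp only [IsHermitian.cfc, ← map_mul, diagonal_mul_diagonal]
  simp [Function.comp_def]

lemma trace_cfc (hA : A.IsHermitian) (f : ℝ → ℝ) :
    (hA.cfc f).trace = ∑ i, (f (hA.eigenvalues i) : 𝕜) := by
  rw [IsHermitian.cfc, Unitary.conjStarAlgAut_apply, trace_mul_cycle, Unitary.coe_star_mul_self,
    Matrix.one_mul, trace_diagonal]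
  rfl

lemma trace_exp (hH : H.IsHermitian) :
    (NormedSpace.exp H).trace = ∑ i, (Real.exp (hH.eigenvalues i) : 𝕜) := by
  set V : Matrix n n 𝕜 := ↑hH.eigenvectorUnitary
  have hV : V⁻¹ = star V := inv_eq_left_inv (Unitary.coe_star_mul_self hH.eigenvectorUnitary)
  have hH' : H = V * diagonal (RCLike.ofReal ∘ hH.eigenvalues) * V⁻¹ := by
    rw [hV]; exact hH.spectral_theorem
  conv_lhs => rw [hH', exp_conj V _ (Unitary.toUnits hH.eigenvectorUnitary).isUnit,
    trace_mul_cycle, hV, Unitary.coe_star_mul_self, Matrix.one_mul, exp_diagonal, trace_diagonal]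
  refine sum_congr rfl fun i _ => ?_
  simp [Real.exp_eq_exp_ℝ, ← NormedSpace.algebraMap_exp_comm]

/-- The `(i, j)` entry is `|⟪v_i, u_j⟫|²` for the eigenbases `v` of `H` and `u` of `A`. -/
noncomputable def eigenvectorOverlap (hA : A.IsHermitian) (hH : H.IsHermitian) : Matrix n n ℝ :=
  (star (hH.eigenvectorUnitary : Matrix n n 𝕜) * hA.eigenvectorUnitary).map (‖·‖ ^ 2)

lemma eigenvectorOverlap_mem_doublyStochastic (hA : A.IsHermitian) (hH : H.IsHermitian) :
    hA.eigenvectorOverlap hH ∈ doublyStochastic ℝ n :=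
  map_norm_sq_mem_doublyStochastic <| mul_mem (Unitary.star_mem hH.eigenvectorUnitary.2)
    hA.eigenvectorUnitary.2

lemma star_eigenvectorUnitary_mul_cfc_mul_apply_self (hA : A.IsHermitian) (hH : H.IsHermitian)
    (f : ℝ → ℝ) (i : n) :
    (star (hH.eigenvectorUnitary : Matrix n n 𝕜) * hA.cfc f * hH.eigenvectorUnitary) i i =
      ((hA.eigenvectorOverlap hH *ᵥ (f ∘ hA.eigenvalues)) i : 𝕜) := by
  set V : Matrix n n 𝕜 := ↑hH.eigenvectorUnitary
  set W : Matrix n n 𝕜 := star V * hA.eigenvectorUnitary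
  have : star V * hA.cfc f * V = W * diagonal (RCLike.ofReal ∘ f ∘ hA.eigenvalues) * star W := by
    simp only [IsHermitian.cfc, Unitary.conjStarAlgAut_apply, W, star_mul, star_star,
      Matrix.mul_assoc]
  rw [this, mul_diagonal_mul_star_apply_self]
  rfl

lemma trace_mul_eq_sum_star_eigenvectorUnitary_mul_apply_self (hH : H.IsHermitian)
    (X : Matrix n n 𝕜) :
    (X * H).trace = ∑ i, (star (hH.eigenvectorUnitary : Matrix n n 𝕜) * X *
      hH.eigenvectorUnitary) i i * hH.eigenvalues i := by
  conv_lhs => rw [hH.spectral_theorem, Unitary.conjStarAlgAut_apply, ← Matrix.mul_assoc,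
    ← Matrix.mul_assoc, trace_mul_cycle, ← Matrix.mul_assoc]
  simp [trace, mul_diagonal]

lemma trace_cfc_mul (hA : A.IsHermitian) (hH : H.IsHermitian) (f : ℝ → ℝ) :
    (hA.cfc f * H).trace =
      ((∑ i, (hA.eigenvectorOverlap hH *ᵥ (f ∘ hA.eigenvalues)) i * hH.eigenvalues i : ℝ) : 𝕜) := by
  simp [trace_mul_eq_sum_star_eigenvectorUnitary_mul_apply_self hH,
    star_eigenvectorUnitary_mul_cfc_mul_apply_self hA hH]

lemma norm_star_eigenvectorUnitary_mul_mul_apply_self_le (hH : H.IsHermitian)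
    (B : Matrix n n 𝕜) (i : n) :
    ‖(star (hH.eigenvectorUnitary : Matrix n n 𝕜) * B * hH.eigenvectorUnitary) i i‖ ≤
      ‖toEuclideanCLM (𝕜 := 𝕜) B‖ := by
  set e := hH.eigenvectorBasis i
  have : (star (hH.eigenvectorUnitary : Matrix n n 𝕜) * B * hH.eigenvectorUnitary) i i =
      inner 𝕜 e (toEuclideanCLM (𝕜 := 𝕜) B e) := by
    rw [mul_mul_apply, EuclideanSpace.inner_eq_star_dotProduct, ofLp_toEuclideanCLM,
      dotProduct_comm]
    rfl
  calc _ = ‖inner 𝕜 e (toEuclideanCLM (𝕜 := 𝕜) B e)‖ := by rw [this]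
    _ ≤ ‖e‖ * (‖toEuclideanCLM (𝕜 := 𝕜) B‖ * ‖e‖) :=
        (norm_inner_le_norm _ _).trans (by gcongr; exact ContinuousLinearMap.le_opNorm _ _)
    _ = _ := by simp [e, hH.eigenvectorBasis.orthonormal.1 i]

lemma star_eigenvectorUnitary_mul_self_mul_apply_self (hH : H.IsHermitian) (i : n) :
    (star (hH.eigenvectorUnitary : Matrix n n 𝕜) * H * hH.eigenvectorUnitary) i i =
      hH.eigenvalues i := by
  have := hH.conjStarAlgAut_star_eigenvectorUnitary
  rw [Unitary.conjStarAlgAut_apply, Unitary.coe_star, star_star] at this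
  simp [this]

lemma eigenvalues_le_mulVec_add_norm (hA : A.IsHermitian) (f : ℝ → ℝ) (B : Matrix n n 𝕜)
    (hH : (hA.cfc f + B).IsHermitian) (i : n) :
    hH.eigenvalues i ≤
      (hA.eigenvectorOverlap hH *ᵥ (f ∘ hA.eigenvalues)) i + ‖toEuclideanCLM (𝕜 := 𝕜) B‖ := by
  have hB : ((hH.eigenvalues i - (hA.eigenvectorOverlap hH *ᵥ (f ∘ hA.eigenvalues)) i : ℝ) : 𝕜) =
      (star (hH.eigenvectorUnitary : Matrix n n 𝕜) * B * hH.eigenvectorUnitary) i i := by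
    have := hH.star_eigenvectorUnitary_mul_self_mul_apply_self i
    rw [Matrix.mul_add, Matrix.add_mul, add_apply,
      star_eigenvectorUnitary_mul_cfc_mul_apply_self hA hH] at this
    rw [RCLike.ofReal_sub, ← this, add_sub_cancel_left]
  have := hH.norm_star_eigenvectorUnitary_mul_mul_apply_self_le B i
  rw [← hB, RCLike.norm_ofReal] at this
  exact sub_le_iff_le_add'.1 ((le_abs_self _).trans this)

end Matrix.IsHermitian

end RCLike

theorem stmt17_general (n : ℕ) (ρ B : Matrix (Fin n) (Fin n) ℂ)
    (hρ : ρ.PosDef) (hρtr : ρ.trace = 1) (hB : B.IsHermitian) :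
    Complex.exp ((ρ * B).trace) ≤
        (NormedSpace.exp (hρ.1.cfc Real.log + B)).trace ∧
      (NormedSpace.exp (hρ.1.cfc Real.log + B)).trace ≤
        Complex.exp ((‖Matrix.toEuclideanCLM (𝕜 := ℂ) B‖ : ℂ)) := by
  set L := hρ.1.cfc Real.log
  have hH : (L + B).IsHermitian := (hρ.1.isHermitian_cfc Real.log).add hB
  set p := hρ.1.eigenvalues
  set C := hρ.1.eigenvectorOverlap hH
  have hC : C ∈ doublyStochastic ℝ (Fin n) := hρ.1.eigenvectorOverlap_mem_doublyStochastic hH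
  have hp : ∀ j, 0 < p j := hρ.eigenvalues_pos
  have hpsum : ∑ j, p j = 1 := by
    have := hρ.1.trace_eq_sum_eigenvalues.symm.trans hρtr
    simp only [RCLike.ofReal_eq_complex_ofReal] at this
    exact_mod_cast this
  have hρ_cfc : ρ = hρ.1.cfc id := (cfc_id ℝ ρ hρ.1.isSelfAdjoint).symm.trans (hρ.1.cfc_eq id)
  have htrace : (ρ * B).trace =
      ((∑ i, (C *ᵥ p) i * hH.eigenvalues i - ∑ j, p j * Real.log (p j) : ℝ) : ℂ) := by
    have hρL : (ρ * L).trace = ((∑ j, p j * Real.log (p j) : ℝ) : ℂ) := by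
      rw [hρ_cfc, hρ.1.cfc_mul_cfc, hρ.1.trace_cfc]
      push_cast
      rfl
    have hρH : (ρ * (L + B)).trace = ((∑ i, (C *ᵥ p) i * hH.eigenvalues i : ℝ) : ℂ) := by
      rw [hρ_cfc]
      exact hρ.1.trace_cfc_mul hH id
    rw [Complex.ofReal_sub, ← hρH, ← hρL, Matrix.mul_add, trace_add, add_sub_cancel_left]
  rw [htrace, hH.trace_exp]
  simp only [RCLike.ofReal_eq_complex_ofReal, ← Complex.ofReal_sum, ← Complex.ofReal_exp,
    Complex.real_le_real]
  exact ⟨exp_sum_mulVec_mul_sub_sum_mul_log_le hC hp hpsum _,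
    sum_exp_le_exp_of_le_mulVec_log_add hC hp hpsum
      (hρ.1.eigenvalues_le_mulVec_add_norm Real.log B hH)⟩

/-- For a positive definite density matrix `ρ` (trace one) and a Hermitian
matrix `B`, `exp(Tr(ρB)) ≤ Tr(exp(log ρ + B)) ≤ exp(‖B‖)`, where `log ρ` is the
functional-calculus matrix logarithm and `‖B‖` is the (ℓ²-)operator norm of `B`. -/
theorem stmt17 (n : ℕ) (hn : 1 ≤ n) (ρ B : Matrix (Fin n) (Fin n) ℂ)
    (hρ : ρ.PosDef) (hρtr : ρ.trace = 1) (hB : B.IsHermitian) :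
    Complex.exp ((ρ * B).trace) ≤
        (NormedSpace.exp (hρ.1.cfc Real.log + B)).trace ∧
      (NormedSpace.exp (hρ.1.cfc Real.log + B)).trace ≤
        Complex.exp ((‖Matrix.toEuclideanCLM (𝕜 := ℂ) B‖ : ℂ)) :=
  stmt17_general n ρ B hρ hρtr hB
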